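/- arXiv:1402.5376 — 7 statements merged into one kernel-verified Lean document; each statement's English description precedes it below -/
import Mathlib

section
/- For every θ ∈ [π/3, 2π/3], all five weights u₁(θ), u₂(θ), v(θ), w₁(θ), w₂(θ) given by the explicit formulas of Theorem 1 are nonnegative. -/
/-! For `θ ∈ [π/3, 2π/3]` we have `3θ/8 ∈ [π/8, π/4]`, which places every sine argument in the
formulas in a half-period where its sign is fixed. The denominator `D` is then negative, and each
numerator is a product of two sines of opposite signs, hence nonpositive. -/

open Real

namespace Real

theorem sin_neg_of_pi_lt_of_lt_two_pi {x : ℝ} (hx₁ : π < x) (hx₂ : x < 2 * π) : sin x < 0 := by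
  rw [← sin_sub_two_pi]
  exact sin_neg_of_neg_of_neg_pi_lt (by linarith) (by linarith)

theorem sin_nonpos_of_pi_le_of_le_two_pi {x : ℝ} (hx₁ : π ≤ x) (hx₂ : x ≤ 2 * π) : sin x ≤ 0 := by
  rw [← sin_sub_two_pi]
  exact sin_nonpos_of_nonpos_of_neg_pi_le (by linarith) (by linarith)

end Real

theorem stmt_4 (θ : ℝ) (hθ : θ ∈ Set.Icc (π/3) (2*π/3)) :
    let D : ℝ := Real.sin (5*π/4 + 3*θ/8) * Real.sin (5*π/8 - 3*θ/8)
    let u₁ : ℝ := Real.sin (5*π/4) * Real.sin (5*π/8 + 3*θ/8) / D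
    let u₂ : ℝ := Real.sin (5*π/4) * Real.sin (3*θ/8) / D
    let v : ℝ := Real.sin (5*π/8 + 3*θ/8) * Real.sin (-(3*θ/8)) / D
    let w₁ : ℝ := Real.sin (5*π/8 + 3*θ/8) * Real.sin (5*π/4 - 3*θ/8) / D
    let w₂ : ℝ := Real.sin (15*π/8 + 3*θ/8) * Real.sin (-(3*θ/8)) / D
    0 ≤ u₁ ∧ 0 ≤ u₂ ∧ 0 ≤ v ∧ 0 ≤ w₁ ∧ 0 ≤ w₂ := by
  intro D u₁ u₂ v w₁ w₂
  obtain ⟨hθ₁, hθ₂⟩ := hθ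
  have hπ := pi_pos
  have hD : D < 0 := mul_neg_of_neg_of_pos
    (sin_neg_of_pi_lt_of_lt_two_pi (by linarith) (by linarith))
    (sin_pos_of_pos_of_lt_pi (by linarith) (by linarith))
  have h5π4 : sin (5*π/4) ≤ 0 := sin_nonpos_of_pi_le_of_le_two_pi (by linarith) (by linarith)
  have hsum : 0 ≤ sin (5*π/8 + 3*θ/8) := sin_nonneg_of_nonneg_of_le_pi (by linarith) (by linarith)
  have hpos : 0 ≤ sin (3*θ/8) := sin_nonneg_of_nonneg_of_le_pi (by linarith) (by linarith)
  have hneg : sin (-(3*θ/8)) ≤ 0 := sin_nonpos_of_nonpos_of_neg_pi_le (by linarith) (by linarith)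
  have hdiff : sin (5*π/4 - 3*θ/8) ≤ 0 :=
    sin_nonpos_of_pi_le_of_le_two_pi (by linarith) (by linarith)
  have h15π8 : 0 ≤ sin (15*π/8 + 3*θ/8) := by
    rw [← sin_sub_two_pi]
    exact sin_nonneg_of_nonneg_of_le_pi (by linarith) (by linarith)
  exact ⟨div_nonneg_of_nonpos (mul_nonpos_of_nonpos_of_nonneg h5π4 hsum) hD.le,
    div_nonneg_of_nonpos (mul_nonpos_of_nonpos_of_nonneg h5π4 hpos) hD.le,
    div_nonneg_of_nonpos (mul_nonpos_of_nonneg_of_nonpos hsum hneg) hD.le,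
    div_nonneg_of_nonpos (mul_nonpos_of_nonneg_of_nonpos hsum hdiff) hD.le,
    div_nonneg_of_nonpos (mul_nonpos_of_nonneg_of_nonpos h15π8 hneg) hD.le⟩
end

section
/- For every θ ∈ [π/3, 2π/3], the weights of Theorem 1 satisfy u₁(θ)² ≥ w₁(θ). -/
/-!
Write `y = 3θ/8 ∈ [π/8, π/4]`. Since `sin (5π/4) ^ 2 = 1/2`, the identity
`sin (α - y) sin (α + y) = sin α ^ 2 - sin y ^ 2` collapses the numerator of `u₁² - w₁`, giving
`u₁² - w₁ = sin (5π/8 + y) · sin 2y · cos (5π/8 - y) / (2 D²)`.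
Each factor is nonnegative for `y ∈ [π/8, π/4]`, and the cosine vanishes at `θ = π/3`.
-/

open Real

theorem sq_div_sub_div_eq {K : Type*} [Field K] (a b c d : K) :
    (a * b / d) ^ 2 - b * c / d = b * (a ^ 2 * b - c * d) / d ^ 2 := by
  rcases eq_or_ne d 0 with rfl | hd
  · simp
  · field_simp

theorem Real.sin_sub_mul_sin_add (x y : ℝ) :
    sin (x - y) * sin (x + y) = sin x ^ 2 - sin y ^ 2 := by
  rw [sin_sub, sin_add]
  linear_combination sin x ^ 2 * cos_sq_add_sin_sq y - sin y ^ 2 * cos_sq_add_sin_sq x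

theorem Real.sin_add_sub_cos_two_mul_mul_sin_sub (x y : ℝ) :
    sin (x + y) - cos (2 * y) * sin (x - y) = sin (2 * y) * cos (x - y) := by
  rw [show x + y = (x - y) + 2 * y by ring, sin_add]
  ring

theorem sq_weight_sub_weight_eq (α β y : ℝ) (hα : sin α ^ 2 = 1 / 2) :
    (sin α * sin (β + y) / (sin (α + y) * sin (β - y))) ^ 2
        - sin (β + y) * sin (α - y) / (sin (α + y) * sin (β - y)) =
      sin (β + y) * (sin (2 * y) * cos (β - y)) / (2 * (sin (α + y) * sin (β - y)) ^ 2) := by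
  rw [sq_div_sub_div_eq, ← mul_assoc, sin_sub_mul_sin_add, hα,
    ← sin_add_sub_cos_two_mul_mul_sin_sub, cos_two_mul', sin_sq]
  field_simp
  ring

theorem stmt_5 (θ : ℝ) (hθ : θ ∈ Set.Icc (π/3) (2*π/3)) :
    let D : ℝ := Real.sin (5*π/4 + 3*θ/8) * Real.sin (5*π/8 - 3*θ/8)
    let u₁ : ℝ := Real.sin (5*π/4) * Real.sin (5*π/8 + 3*θ/8) / D
    let w₁ : ℝ := Real.sin (5*π/8 + 3*θ/8) * Real.sin (5*π/4 - 3*θ/8) / D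
    u₁^2 ≥ w₁ := by
  intro D u₁ w₁
  obtain ⟨hlo, hhi⟩ := hθ
  have hπ := pi_pos
  have hsin : sin (5*π/4) ^ 2 = 1 / 2 := by
    rw [show 5*π/4 = π/4 + π by ring, sin_add_pi, neg_sq, sin_pi_div_four, div_pow,
      sq_sqrt zero_le_two]
    norm_num
  rw [ge_iff_le, ← sub_nonneg]
  change 0 ≤ (sin (5*π/4) * sin (5*π/8 + 3*θ/8) / D) ^ 2
    - sin (5*π/8 + 3*θ/8) * sin (5*π/4 - 3*θ/8) / D
  rw [sq_weight_sub_weight_eq _ _ _ hsin]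
  refine div_nonneg (mul_nonneg ?_ (mul_nonneg ?_ ?_)) (by positivity)
  · exact sin_nonneg_of_nonneg_of_le_pi (by linarith) (by linarith)
  · exact sin_nonneg_of_nonneg_of_le_pi (by linarith) (by linarith)
  · exact cos_nonneg_of_mem_Icc ⟨by linarith, by linarith⟩
end

section
/- For every θ ∈ [π/3, 2π/3], the weights of Theorem 1 satisfy u₂(θ)² ≥ w₂(θ). -/
open Real

/-!
Write `u₂ = a / D` and `w₂ = b / D`. Since `b / d ≤ (a / d) ^ 2` as soon as `b * d ≤ a ^ 2`
(also for `d = 0`), only the numerators matter. With `x = 3θ/8`, shifting the angles by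
multiples of `π/8` and a product-to-sum formula give `a² - b D = sin x (sin x + cos 3x) / 4`,
and `sin x + cos 3x = cos 3x - cos (x + π/2) ≥ 0` for `0 ≤ x ≤ π/4` because `cos` is
antitone on `[0, π]`.
-/

theorem div_le_div_sq_of_mul_le {K : Type*} [Field K] [LinearOrder K] [IsStrictOrderedRing K]
    {a b d : K} (h : b * d ≤ a ^ 2) : b / d ≤ (a / d) ^ 2 := by
  rcases eq_or_ne d 0 with rfl | hd
  · simp
  · calc b / d = b * d / d ^ 2 := by field_simp
      _ ≤ a ^ 2 / d ^ 2 := div_le_div_of_nonneg_right h (sq_nonneg d)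
      _ = (a / d) ^ 2 := (div_pow a d 2).symm

theorem sin_two_mul_sub_pi_div_four_mul_sin_add_pi_div_four (x : ℝ) :
    sin (2 * x - π / 4) * sin (x + π / 4) = (sin x - cos (3 * x)) / 2 := by
  have h := cos_sub_cos (x - π / 2) (3 * x)
  rw [cos_sub_pi_div_two] at h
  rw [h, show (x - π / 2 + 3 * x) / 2 = 2 * x - π / 4 by ring,
    show (x - π / 2 - 3 * x) / 2 = -(x + π / 4) by ring, sin_neg]
  ring

theorem sin_add_cos_three_mul_nonneg {x : ℝ} (h0 : 0 ≤ x) (h1 : x ≤ π / 4) :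
    0 ≤ sin x + cos (3 * x) := by
  have h := cos_le_cos_of_nonneg_of_le_pi (x := 3 * x) (y := x + π / 2)
    (by linarith) (by linarith) (by linarith)
  rw [cos_add_pi_div_two] at h
  linarith

theorem sin_five_pi_div_four : sin (5 * π / 4) = -(√2 / 2) := by
  rw [show 5 * π / 4 = π / 4 + π by ring, sin_add_pi, sin_pi_div_four]

theorem sin_fifteen_pi_div_eight_add_mul_sin_neg_mul_sin_mul_sin (x : ℝ) :
    sin (15 * π / 8 + x) * sin (-x) * (sin (5 * π / 4 + x) * sin (5 * π / 8 - x)) =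
      sin x * (sin x - cos (3 * x)) / 4 := by
  have h₁ : sin (15 * π / 8 + x) = sin (x - π / 8) := by
    rw [show 15 * π / 8 + x = x - π / 8 + 2 * π by ring, sin_add_two_pi]
  have h₂ : sin (5 * π / 4 + x) = -sin (x + π / 4) := by
    rw [show 5 * π / 4 + x = x + π / 4 + π by ring, sin_add_pi]
  have h₃ : sin (5 * π / 8 - x) = cos (x - π / 8) := by
    rw [show 5 * π / 8 - x = π / 2 - (x - π / 8) by ring, sin_pi_div_two_sub]
  have h₄ : sin (x - π / 8) * cos (x - π / 8) = sin (2 * x - π / 4) / 2 := by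
    rw [show 2 * x - π / 4 = 2 * (x - π / 8) by ring, sin_two_mul]; ring
  rw [h₁, h₂, h₃, sin_neg]
  linear_combination (sin x * sin (x + π / 4)) * h₄ +
    (sin x / 2) * sin_two_mul_sub_pi_div_four_mul_sin_add_pi_div_four x

theorem stmt_6 (θ : ℝ) (hθ : θ ∈ Set.Icc (π/3) (2*π/3)) :
    let D : ℝ := Real.sin (5*π/4 + 3*θ/8) * Real.sin (5*π/8 - 3*θ/8)
    let u₂ : ℝ := Real.sin (5*π/4) * Real.sin (3*θ/8) / D
    let w₂ : ℝ := Real.sin (15*π/8 + 3*θ/8) * Real.sin (-(3*θ/8)) / D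
    u₂^2 ≥ w₂ := by
  intro D u₂ w₂
  obtain ⟨hθ₀, hθ₁⟩ := hθ
  have hx₀ : 0 ≤ 3 * θ / 8 := by linarith [pi_pos]
  have hx₁ : 3 * θ / 8 ≤ π / 4 := by linarith
  refine div_le_div_sq_of_mul_le ?_
  have hsin : 0 ≤ sin (3 * θ / 8) := sin_nonneg_of_nonneg_of_le_pi hx₀ (by linarith [pi_pos])
  have key := mul_nonneg hsin (sin_add_cos_three_mul_nonneg hx₀ hx₁)
  rw [sin_fifteen_pi_div_eight_add_mul_sin_neg_mul_sin_mul_sin, mul_pow, sin_five_pi_div_four]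
  linear_combination key / 4 - sin (3 * θ / 8) ^ 2 / 4 * sq_sqrt (zero_le_two (α := ℝ))
end

section
/- For θ = π/3 and any real s with t ≠ 0, the O(n) model weights satisfy w₂ = 0 and u₂ = v = w₁ = u₁², where u₁ = ±1/√(2±√(2−n)) with n = −2cos(4πs/3). -/
/-! At `θ = π/3` every weight is a quotient of sines and cosines of `x = π s / 3`: the second
term of `t` vanishes and the first is `sin (2x)³ / sin x = 8 sin² x cos³ x`, so
`u₁ = sin (2x)² / t = 1 / (2 cos x)` and `u₂ = v = w₁ = sin x sin (2x) / t = 1 / (4 cos² x) = u₁²`.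
Then `1 / u₁² - 2 = 4 cos² x - 2 = 2 cos (2x)`, whose square is `2 + 2 cos (4x) = 2 - n`. -/

open Real

lemma sin_two_mul_pow_three_div_sin (x : ℝ) :
    sin (2 * x) ^ 3 / sin x = 8 * sin x ^ 2 * cos x ^ 3 := by
  rw [sin_two_mul]
  by_cases hS : sin x = 0
  · simp [hS]
  · field_simp
    ring

lemma sin_two_mul_sq_div (x : ℝ) (hS : sin x ≠ 0) :
    sin (2 * x) * sin (2 * x) / (8 * sin x ^ 2 * cos x ^ 3) = 1 / (2 * cos x) := by
  by_cases hC : cos x = 0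
  · simp [hC]
  · rw [sin_two_mul]
    field_simp
    ring

lemma sin_mul_sin_two_mul_div (x : ℝ) (hS : sin x ≠ 0) :
    sin x * sin (2 * x) / (8 * sin x ^ 2 * cos x ^ 3) = (1 / (2 * cos x)) ^ 2 := by
  by_cases hC : cos x = 0
  · simp [hC]
  · rw [sin_two_mul]
    field_simp
    ring

lemma two_add_two_mul_cos_four_mul (x : ℝ) :
    2 + 2 * cos (4 * x) = (4 * cos x ^ 2 - 2) ^ 2 := by
  have h4 : cos (4 * x) = 2 * cos (2 * x) ^ 2 - 1 := by
    rw [show 4 * x = 2 * (2 * x) by ring, cos_two_mul]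
  rw [h4, cos_two_mul]
  ring

theorem stmt_9 (s : ℝ) :
    let θ : ℝ := π/3
    let n : ℝ := -2 * Real.cos (4*π*s/3)
    let t : ℝ := (Real.sin (2*π*s/3))^3 / Real.sin (π*s/3) +
      Real.sin ((θ - π/3)*s) * Real.sin ((2*π/3 - θ)*s)
    let u₁ : ℝ := Real.sin ((π - θ)*s) * Real.sin (2*π*s/3) / t
    let u₂ : ℝ := Real.sin (θ*s) * Real.sin (2*π*s/3) / t
    let v : ℝ := Real.sin (θ*s) * Real.sin ((π - θ)*s) / t
    let w₁ : ℝ := Real.sin ((2*π/3 - θ)*s) * Real.sin ((π - θ)*s) / t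
    let w₂ : ℝ := Real.sin ((θ - π/3)*s) * Real.sin (θ*s) / t
    t ≠ 0 →
      w₂ = 0 ∧ u₂ = u₁^2 ∧ v = u₁^2 ∧ w₁ = u₁^2 ∧
      2 - n = (1 / u₁^2 - 2)^2 := by
  intro θ n t u₁ u₂ v w₁ w₂ ht
  set x := π * s / 3
  have h0 : (θ - π/3) * s = 0 := by simp [θ]
  have h1 : θ * s = x := by ring
  have h1' : (2*π/3 - θ) * s = x := by ring
  have h2 : (π - θ) * s = 2 * x := by ring
  have h2' : 2*π*s/3 = 2 * x := by ring
  have h4 : 4*π*s/3 = 4 * x := by ring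
  have ht_eq : t = 8 * sin x ^ 2 * cos x ^ 3 := by
    simp only [t, h0, h2', sin_zero, zero_mul, add_zero]
    exact sin_two_mul_pow_three_div_sin x
  have hS : sin x ≠ 0 := fun h => ht (by simp [ht_eq, h])
  have hu₁ : u₁ = 1 / (2 * cos x) := by
    simp only [u₁, h2, h2', ht_eq, sin_two_mul_sq_div x hS]
  have hsq : sin x * sin (2 * x) / t = u₁ ^ 2 := by
    rw [hu₁, ht_eq, sin_mul_sin_two_mul_div x hS]
  refine ⟨by simp [w₂, h0], ?_, ?_, ?_, ?_⟩
  · simpa only [u₂, h1, h2'] using hsq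
  · simpa only [v, h1, h2] using hsq
  · simpa only [w₁, h1', h2] using hsq
  · calc 2 - n = 2 + 2 * cos (4 * x) := by simp only [n, h4]; ring
      _ = (4 * cos x ^ 2 - 2) ^ 2 := two_add_two_mul_cos_four_mul x
      _ = (1 / u₁ ^ 2 - 2) ^ 2 := by rw [hu₁, div_pow, one_pow, one_div_one_div]; ring
end

section
/- Suppose complex numbers λ = e^{−iσθ}, μ = e^{−iσπ} with σ, θ real, and real weights u₁,u₂,v,w₁,w₂ with v ≠ 0 satisfy the four local equations (i) 1 + λμ̄e^{iθ}u₂ − v − λe^{iθ}u₁ = 0, (ii) λμ̄²e^{iθ}v − μu₂ − λe^{iθ}w₂ = 0, (iii) −λμe^{iθ}v − μ̄u₁ + λμ̄e^{iθ}w₁ = 0, (iv) −λμe^{iθ}u₂ − μ²w₂ + λμ̄²e^{iθ}u₁ − μ̄²w₁ = 0, together with the equations obtained from (i)–(iv) by conjugating all terms except the real weights. Then cos(4σπ) = 0. -/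
/-!
All three phases `λ`, `μ`, `e^{iθ}` lie on the unit circle, so conjugation inverts them. With that,
the combination `λ e^{iθ} μ² · conj(ii) - λ e^{iθ} μ̄³ · conj(iii) - (iv)` of the local equations
collapses to `(μ⁴ + μ̄⁴) v = 0`. As `v ≠ 0` this forces `Re μ⁴ = 0`, and `Re μ⁴ = cos (4σπ)`.
-/

open Complex ComplexConjugate

theorem pow_four_add_inv_pow_four_mul_eq_zero {K : Type*} [Field K] {l m e u₁ u₂ v w₁ w₂ : K}
    (hl : l ≠ 0) (hm : m ≠ 0) (he : e ≠ 0)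
    (h2c : l⁻¹ * m ^ 2 * e⁻¹ * v - m⁻¹ * u₂ - l⁻¹ * e⁻¹ * w₂ = 0)
    (h3c : -(l⁻¹ * m⁻¹ * e⁻¹ * v) - m * u₁ + l⁻¹ * m * e⁻¹ * w₁ = 0)
    (h4 : -(l * m * e * u₂) - m ^ 2 * w₂ + l * m⁻¹ ^ 2 * e * u₁ - m⁻¹ ^ 2 * w₁ = 0) :
    (m ^ 4 + m⁻¹ ^ 4) * v = 0 := by
  linear_combination (norm := (field_simp; ring))
    l * e * m ^ 2 * h2c - l * e * m⁻¹ ^ 3 * h3c - h4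

theorem conj_exp_ofReal_mul_I (x : ℝ) : conj (exp (x * I)) = (exp (x * I))⁻¹ :=
  (inv_eq_conj (norm_exp_ofReal_mul_I x)).symm

theorem re_exp_ofReal_mul_I_pow (x : ℝ) (n : ℕ) : (exp (x * I) ^ n).re = Real.cos (n * x) := by
  rw [← exp_nat_mul, ← mul_assoc, ← ofReal_natCast, ← ofReal_mul, exp_ofReal_mul_I_re]

theorem re_eq_zero_of_add_conj_eq_zero {z : ℂ} (h : z + conj z = 0) : z.re = 0 := by
  rw [add_conj, ofReal_eq_zero] at h
  linarith

theorem stmt_10_general (σ θ : ℝ) (u₁ u₂ v w₁ w₂ : ℝ) (hv : v ≠ 0)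
    (l m e : ℂ)
    (hl : l = Complex.exp (-(σ*θ) * Complex.I))
    (hm : m = Complex.exp (-(σ*Real.pi) * Complex.I))
    (he : e = Complex.exp ((θ:ℂ) * Complex.I))
    (h4 : -(l * m * e * (u₂:ℂ)) - m^2 * (w₂:ℂ)
      + l * ((starRingEnd ℂ) m)^2 * e * (u₁:ℂ) - ((starRingEnd ℂ) m)^2 * (w₁:ℂ) = 0)
    (h2c : (starRingEnd ℂ) l * m^2 * (starRingEnd ℂ) e * (v:ℂ)
      - (starRingEnd ℂ) m * (u₂:ℂ) - (starRingEnd ℂ) l * (starRingEnd ℂ) e * (w₂:ℂ) = 0)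
    (h3c : -((starRingEnd ℂ) l * (starRingEnd ℂ) m * (starRingEnd ℂ) e * (v:ℂ))
      - m * (u₁:ℂ) + (starRingEnd ℂ) l * m * (starRingEnd ℂ) e * (w₁:ℂ) = 0) :
    Real.cos (4*σ*Real.pi) = 0 := by
  rw [← ofReal_mul, ← ofReal_neg] at hl hm
  have hl' : conj l = l⁻¹ := by rw [hl, conj_exp_ofReal_mul_I]
  have hm' : conj m = m⁻¹ := by rw [hm, conj_exp_ofReal_mul_I]
  have he' : conj e = e⁻¹ := by rw [he, conj_exp_ofReal_mul_I]
  simp only [hl', hm', he'] at h2c h3c h4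
  have key := pow_four_add_inv_pow_four_mul_eq_zero (hl ▸ exp_ne_zero _) (hm ▸ exp_ne_zero _)
    (he ▸ exp_ne_zero _) h2c h3c h4
  have hsum : m ^ 4 + conj (m ^ 4) = 0 := by
    rw [map_pow, hm']
    exact (mul_eq_zero.mp key).resolve_right (ofReal_ne_zero.mpr hv)
  have hre : (m ^ 4).re = Real.cos (4 * σ * Real.pi) := by
    rw [hm, re_exp_ofReal_mul_I_pow, mul_neg, Real.cos_neg, ← mul_assoc]
    norm_num
  rw [← hre, re_eq_zero_of_add_conj_eq_zero hsum]

theorem stmt_10 (σ θ : ℝ) (u₁ u₂ v w₁ w₂ : ℝ) (hv : v ≠ 0)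
    (l m e : ℂ)
    (hl : l = Complex.exp (-(σ*θ) * Complex.I))
    (hm : m = Complex.exp (-(σ*Real.pi) * Complex.I))
    (he : e = Complex.exp ((θ:ℂ) * Complex.I))
    (h1 : 1 + l * (starRingEnd ℂ) m * e * (u₂:ℂ) - (v:ℂ) - l * e * (u₁:ℂ) = 0)
    (h2 : l * ((starRingEnd ℂ) m)^2 * e * (v:ℂ) - m * (u₂:ℂ) - l * e * (w₂:ℂ) = 0)
    (h3 : -(l * m * e * (v:ℂ)) - (starRingEnd ℂ) m * (u₁:ℂ)
      + l * (starRingEnd ℂ) m * e * (w₁:ℂ) = 0)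
    (h4 : -(l * m * e * (u₂:ℂ)) - m^2 * (w₂:ℂ)
      + l * ((starRingEnd ℂ) m)^2 * e * (u₁:ℂ) - ((starRingEnd ℂ) m)^2 * (w₁:ℂ) = 0)
    (h1c : 1 + (starRingEnd ℂ) l * m * (starRingEnd ℂ) e * (u₂:ℂ) - (v:ℂ)
      - (starRingEnd ℂ) l * (starRingEnd ℂ) e * (u₁:ℂ) = 0)
    (h2c : (starRingEnd ℂ) l * m^2 * (starRingEnd ℂ) e * (v:ℂ)
      - (starRingEnd ℂ) m * (u₂:ℂ) - (starRingEnd ℂ) l * (starRingEnd ℂ) e * (w₂:ℂ) = 0)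
    (h3c : -((starRingEnd ℂ) l * (starRingEnd ℂ) m * (starRingEnd ℂ) e * (v:ℂ))
      - m * (u₁:ℂ) + (starRingEnd ℂ) l * m * (starRingEnd ℂ) e * (w₁:ℂ) = 0)
    (h4c : -((starRingEnd ℂ) l * (starRingEnd ℂ) m * (starRingEnd ℂ) e * (u₂:ℂ))
      - ((starRingEnd ℂ) m)^2 * (w₂:ℂ) + (starRingEnd ℂ) l * m^2 * (starRingEnd ℂ) e * (u₁:ℂ)
      - m^2 * (w₁:ℂ) = 0) :
    Real.cos (4*σ*Real.pi) = 0 :=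
  stmt_10_general σ θ u₁ u₂ v w₁ w₂ hv l m e hl hm he h4 h2c h3c
end

section
/- Let c > 0 and let (B_T)_{T≥1} be a sequence of positive reals satisfying (c_α/(x_c u₂))·B_{T+1}² + B_{T+1} ≥ B_T for all T ≥ 1, where c = x_c u₂/c_α. Then B_T ≥ min(B₁, c)/T for all T ≥ 1. -/
/-! Since `x ↦ x² / c + x` is increasing on `x ≥ 0`, a term `B (n+1) < m / (n+1)` would force
`B n ≤ t² / c + t` with `t = m / (n+1)`; for `m ≤ c` this is at most `m (n+2) / (n+1)² < m / n`,
contradicting the induction hypothesis `m / n ≤ B n`. -/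

theorem div_add_one_le_of_div_le_sq_div_add {c m n x : ℝ} (hn : 0 < n) (hx : 0 < x)
    (hmc : m ≤ c) (h : m / n ≤ x ^ 2 / c + x) : m / (n + 1) ≤ x := by
  rcases le_or_gt m 0 with hm | hm
  · exact (div_nonpos_of_nonpos_of_nonneg hm (by linarith)).trans hx.le
  by_contra! hlt
  have hc : 0 < c := hm.trans_le hmc
  set t := m / (n + 1)
  have : x ^ 2 / c + x < m / n :=
    calc x ^ 2 / c + x < t ^ 2 / c + t := add_lt_add_of_le_of_lt (by gcongr) hlt
      _ ≤ t ^ 2 / m + t := by gcongr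
      _ = m * (n + 2) / (n + 1) ^ 2 := by simp only [t]; field_simp; ring
      _ < m / n := by rw [div_lt_div_iff₀ (by positivity) hn]; nlinarith
  linarith

theorem div_le_of_le_sq_div_add_succ {c m : ℝ} {B : ℕ → ℝ} (hpos : ∀ T, 1 ≤ T → 0 < B T)
    (hrec : ∀ T, 1 ≤ T → B T ≤ B (T + 1) ^ 2 / c + B (T + 1)) (h₁ : m ≤ B 1) (hmc : m ≤ c) :
    ∀ T, 1 ≤ T → m / T ≤ B T := by
  intro T hT
  induction T, hT using Nat.le_induction with
  | base => simpa using h₁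
  | succ n hn ih =>
    push_cast
    exact div_add_one_le_of_div_le_sq_div_add (by positivity) (hpos _ (by omega)) hmc
      (ih.trans (hrec n hn))

theorem stmt_13_general (cα xc u₂ : ℝ)
    (B : ℕ → ℝ) (hpos : ∀ T, 1 ≤ T → 0 < B T)
    (hrec : ∀ T, 1 ≤ T → cα / (xc * u₂) * (B (T+1))^2 + B (T+1) ≥ B T) :
    ∀ T, 1 ≤ T → B T ≥ min (B 1) (xc * u₂ / cα) / T := by
  have hrec' : ∀ T, 1 ≤ T → B T ≤ B (T + 1) ^ 2 / (xc * u₂ / cα) + B (T + 1) := fun T hT => by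
    rw [div_div_eq_mul_div, mul_comm, mul_div_assoc, ← mul_comm_div]
    exact hrec T hT
  exact div_le_of_le_sq_div_add_succ hpos hrec' (min_le_left _ _) (min_le_right _ _)

theorem stmt_13 (cα xc u₂ : ℝ) (hcα : 0 < cα) (hxc : 0 < xc) (hu₂ : 0 < u₂)
    (B : ℕ → ℝ) (hpos : ∀ T, 1 ≤ T → 0 < B T)
    (hrec : ∀ T, 1 ≤ T → cα / (xc * u₂) * (B (T+1))^2 + B (T+1) ≥ B T) :
    ∀ T, 1 ≤ T → B T ≥ min (B 1) (xc * u₂ / cα) / T :=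
  stmt_13_general cα xc u₂ B hpos hrec
end

section
/- If (B_T)_{T≥1} is a sequence of positive reals with B_{T+1}²/c + B_{T+1} ≥ B_T for fixed c > 0, then the series ∑_T B_T diverges, provided B₁ > 0. -/
/-!
The map `x ↦ x ^ 2 / c + x` is strictly increasing on `[0, ∞)`, and with `m = min B₁ c` it sends
`m / (T + 1)` below `m / T`. Hence the recursion propagates the bound `m / T ≤ B T` from `T` to
`T + 1`, and `∑ B T` dominates a multiple of the harmonic series.
-/

lemma div_add_one_le_of_le_sq_div_add {c m t x y : ℝ} (hc : 0 < c) (hm : 0 ≤ m) (hmc : m ≤ c)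
    (ht : 0 < t) (hx : 0 ≤ x) (hy : m / t ≤ y) (h : y ≤ x ^ 2 / c + x) :
    m / (t + 1) ≤ x := by
  set a := m / (t + 1) with ha
  have hmono : StrictMonoOn (fun z : ℝ => z ^ 2 / c + z) (Set.Ici 0) := fun u hu v _ huv => by
    have : u ^ 2 / c ≤ v ^ 2 / c := by gcongr
    simp only
    linarith
  have hsq : a ^ 2 / c ≤ a / (t + 1) := by
    rw [div_le_div_iff₀ hc (by linarith), ha]
    field_simp
    nlinarith
  -- `a / (t + 1) + a = m (t + 2) / (t + 1) ^ 2`, and `t (t + 2) ≤ (t + 1) ^ 2`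
  have hlin : a / (t + 1) + a ≤ m / t := by
    rw [ha, le_div_iff₀ ht]
    field_simp
    nlinarith
  exact (hmono.le_iff_le (Set.mem_Ici.2 (by positivity)) hx).1 (by linarith)

lemma min_div_le_of_le_sq_div_add {c : ℝ} (hc : 0 < c) {B : ℕ → ℝ}
    (hnonneg : ∀ T, 1 ≤ T → 0 ≤ B T) (hrec : ∀ T, 1 ≤ T → B T ≤ B (T + 1) ^ 2 / c + B (T + 1)) :
    ∀ T, 1 ≤ T → min (B 1) c / T ≤ B T := by
  intro T hT
  induction T, hT using Nat.le_induction with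
  | base => simp
  | succ n hn ih =>
    push_cast
    exact div_add_one_le_of_le_sq_div_add hc (le_min (hnonneg 1 le_rfl) hc.le) (min_le_right _ _)
      (by exact_mod_cast hn) (hnonneg _ (by omega)) ih (hrec n hn)

lemma not_summable_of_div_natCast_le {B : ℕ → ℝ} {m : ℝ} (hm : 0 < m)
    (hB : ∀ n, 1 ≤ n → m / n ≤ B n) : ¬ Summable B := by
  intro hs
  have hshift : Summable fun n : ℕ => m / ((n + 1 : ℕ) : ℝ) :=
    ((summable_nat_add_iff 1).2 hs).of_nonneg_of_le (fun n => by positivity)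
      fun n => hB _ le_add_self
  have : Summable fun n : ℕ => m * (n : ℝ)⁻¹ := (summable_nat_add_iff 1).1 hshift
  exact Real.not_summable_natCast_inv ((summable_mul_left_iff hm.ne').1 this)

theorem stmt_14_general (c : ℝ) (hc : 0 < c)
    (B : ℕ → ℝ) (hpos : ∀ T, 1 ≤ T → 0 < B T)
    (hrec : ∀ T, 1 ≤ T → (B (T+1))^2 / c + B (T+1) ≥ B T) :
    ¬ Summable B :=
  not_summable_of_div_natCast_le (lt_min (hpos 1 le_rfl) hc)
    (min_div_le_of_le_sq_div_add hc (fun T hT => (hpos T hT).le) hrec)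

theorem stmt_14 (c : ℝ) (hc : 0 < c)
    (B : ℕ → ℝ) (hpos : ∀ T, 1 ≤ T → 0 < B T) (hB1 : 0 < B 1)
    (hrec : ∀ T, 1 ≤ T → (B (T+1))^2 / c + B (T+1) ≥ B T) :
    ¬ Summable B :=
  stmt_14_general c hc B hpos hrec
end
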